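/- arXiv:1406.7157 — 4 statements merged into one kernel-verified Lean document; each statement's English description precedes it below -/
import Mathlib

section
/- Let y be a random variable uniform on {−1, 1}, and conditionally on y let ỹ_1, …, ỹ_s ∈ {−1,1} be independent with P(ỹ_i = y | y) = q_i, where q_i ∈ [1/2,1]. Define the majority-vote error event E = ({y = 1} ∩ {∑_{i=1}^s ỹ_i ≤ 0}) ∪ ({y = −1} ∩ {∑_{i=1}^s ỹ_i > 0}). Then P(E) ≤ exp(−(∑_{i=1}^s (2q_i − 1))² / (2s)). That is, the average probability of error of majority voting with a uniform prior on the true label is at most exp(−(∑_i (2q_i−1))²/(2s)). -/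
open MeasureTheory ProbabilityTheory

/-!
Given `y = 1`, the votes are independent `±1` variables with means `2 q i - 1 ≥ 0`, hence
`1`-sub-Gaussian after centring (Hoeffding's lemma), and Hoeffding's inequality bounds the
probability that their sum is `≤ 0` by `exp (-(∑ i, (2 q i - 1)) ^ 2 / (2 s))`. Given `y = -1`
the same applies to the negated votes. Both values of `y` have prior probability `1/2`, so the
error probability is the average of two quantities each below the bound.
-/

section

variable {Ω ι : Type*} [MeasurableSpace Ω] {μ : Measure Ω} [IsProbabilityMeasure μ]

lemma hasSubgaussianMGF_integral_sub_of_mem_Icc {X : Ω → ℝ} (hX : AEMeasurable X μ)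
    (hb : ∀ᵐ ω ∂μ, X ω ∈ Set.Icc (-1) 1) :
    HasSubgaussianMGF (fun ω ↦ μ[X] - X ω) 1 μ := by
  have h := (hasSubgaussianMGF_of_mem_Icc hX hb).neg
  have hc : (‖(1 : ℝ) - -1‖₊ / 2) ^ 2 = 1 := by
    ext; norm_num
  rw [hc] at h
  convert h using 1
  ext ω; simp

lemma measure_sum_nonpos_le_of_mem_Icc [Fintype ι] {X : ι → Ω → ℝ} (hind : iIndepFun X μ)
    (hX : ∀ i, Measurable (X i)) (hb : ∀ i, ∀ᵐ ω ∂μ, X i ω ∈ Set.Icc (-1) 1)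
    (hmean : 0 ≤ ∑ i, μ[X i]) :
    μ {ω | ∑ i, X i ω ≤ 0} ≤
      ENNReal.ofReal (Real.exp (-(∑ i, μ[X i]) ^ 2 / (2 * Fintype.card ι))) := by
  have hZ : iIndepFun (fun i ω ↦ μ[X i] - X i ω) μ :=
    hind.comp _ fun _ ↦ measurable_const.sub measurable_id
  have hoeffding := HasSubgaussianMGF.measure_sum_ge_le_of_iIndepFun hZ (s := Finset.univ)
    (fun i _ ↦ hasSubgaussianMGF_integral_sub_of_mem_Icc (hX i).aemeasurable (hb i)) hmean
  have hsub :
      {ω | ∑ i, X i ω ≤ 0} ⊆ {ω | ∑ i, μ[X i] ≤ ∑ i, (μ[X i] - X i ω)} := by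
    intro ω hω
    simp only [Set.mem_ofPred_eq, Finset.sum_sub_distrib] at hω ⊢
    linarith
  refine (measure_mono hsub).trans ?_
  rw [← ofReal_measureReal]
  refine ENNReal.ofReal_le_ofReal (hoeffding.trans_eq ?_)
  simp

lemma integral_eq_two_mul_measureReal_sub_one {X : Ω → ℝ} (hX : Measurable X)
    (hval : ∀ ω, X ω = -1 ∨ X ω = 1) :
    μ[X] = 2 * μ.real {ω | X ω = 1} - 1 := by
  set S := {ω | X ω = 1}
  have hS : MeasurableSet S := hX (measurableSet_singleton 1)
  calc μ[X] = ∫ ω, (2 * S.indicator 1 ω - 1) ∂μ := by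
        congr 1 with ω
        rcases hval ω with h | h <;> simp [S, Set.indicator, h] <;> norm_num
    _ = 2 * μ.real S - 1 := by
        rw [integral_sub (((integrable_const 1).indicator hS).const_mul 2) (integrable_const 1),
          integral_const_mul, integral_indicator_one hS]
        simp

lemma measure_sum_nonpos_le_of_signs [Fintype ι] {X : ι → Ω → ℝ} {q : ι → ℝ}
    (hind : iIndepFun X μ) (hX : ∀ i, Measurable (X i))
    (hval : ∀ i ω, X i ω = -1 ∨ X i ω = 1)
    (hq : ∀ i, μ {ω | X i ω = 1} = ENNReal.ofReal (q i)) (hq_half : ∀ i, 1 / 2 ≤ q i) :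
    μ {ω | ∑ i, X i ω ≤ 0} ≤
      ENNReal.ofReal (Real.exp (-(∑ i, (2 * q i - 1)) ^ 2 / (2 * Fintype.card ι))) := by
  have hmean : ∀ i, μ[X i] = 2 * q i - 1 := fun i ↦ by
    rw [integral_eq_two_mul_measureReal_sub_one (hX i) (hval i), measureReal_def, hq i,
      ENNReal.toReal_ofReal (by linarith [hq_half i])]
  have hb : ∀ i, ∀ᵐ ω ∂μ, X i ω ∈ Set.Icc (-1) 1 := fun i ↦ ae_of_all _ fun ω ↦ by
    rcases hval i ω with h | h <;> simp [h]
  have hsum : ∑ i, μ[X i] = ∑ i, (2 * q i - 1) := Finset.sum_congr rfl fun i _ ↦ hmean i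
  rw [← hsum]
  refine measure_sum_nonpos_le_of_mem_Icc hind hX hb ?_
  rw [hsum]
  exact Finset.sum_nonneg fun i _ ↦ by linarith [hq_half i]

lemma measure_sum_pos_le_of_signs [Fintype ι] {X : ι → Ω → ℝ} {q : ι → ℝ}
    (hind : iIndepFun X μ) (hX : ∀ i, Measurable (X i))
    (hval : ∀ i ω, X i ω = -1 ∨ X i ω = 1)
    (hq : ∀ i, μ {ω | X i ω = -1} = ENNReal.ofReal (q i)) (hq_half : ∀ i, 1 / 2 ≤ q i) :
    μ {ω | 0 < ∑ i, X i ω} ≤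
      ENNReal.ofReal (Real.exp (-(∑ i, (2 * q i - 1)) ^ 2 / (2 * Fintype.card ι))) := by
  have hneg := measure_sum_nonpos_le_of_signs (X := fun i ω ↦ -X i ω)
    (hind.comp _ fun _ ↦ measurable_neg) (fun i ↦ (hX i).neg)
    (fun i ω ↦ by rcases hval i ω with h | h <;> simp [h])
    (fun i ↦ by simpa [neg_eq_iff_eq_neg] using hq i) hq_half
  refine (measure_mono fun ω hω ↦ ?_).trans hneg
  simp only [Set.mem_ofPred_eq, Finset.sum_neg_distrib] at hω ⊢
  linarith

end

theorem stmt_4_general {Ω : Type*} [MeasurableSpace Ω] (P : Measure Ω) [IsProbabilityMeasure P]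
    (s : ℕ) (y : Ω → ℝ) (Y : Fin s → Ω → ℝ) (q : Fin s → ℝ)
    (hq : ∀ i, q i ∈ Set.Icc (1 / 2 : ℝ) 1)
    (hymeas : Measurable y) (hYmeas : ∀ i, Measurable (Y i))
    (hyval : ∀ ω, y ω = -1 ∨ y ω = 1)
    (hYval : ∀ i ω, Y i ω = -1 ∨ Y i ω = 1)
    (hprior : P {ω | y ω = 1} = ENNReal.ofReal (1 / 2))
    (hcondPlus : iIndepFun Y (P[|{ω | y ω = 1}]))
    (hcondMinus : iIndepFun Y (P[|{ω | y ω = -1}]))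
    (hqPlus : ∀ i, (P[|{ω | y ω = 1}]) {ω | Y i ω = 1} = ENNReal.ofReal (q i))
    (hqMinus : ∀ i, (P[|{ω | y ω = -1}]) {ω | Y i ω = -1} = ENNReal.ofReal (q i)) :
    P (({ω | y ω = 1} ∩ {ω | ∑ i, Y i ω ≤ 0}) ∪
        ({ω | y ω = -1} ∩ {ω | 0 < ∑ i, Y i ω})) ≤
      ENNReal.ofReal (Real.exp (-(∑ i, (2 * q i - 1)) ^ 2 / (2 * s))) := by
  set A := {ω | y ω = 1}
  set B := {ω | y ω = -1}
  set b := ENNReal.ofReal (Real.exp (-(∑ i, (2 * q i - 1)) ^ 2 / (2 * s)))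
  have hA : MeasurableSet A := hymeas (measurableSet_singleton 1)
  have hB : MeasurableSet B := hymeas (measurableSet_singleton (-1))
  have hBA : B = Aᶜ := by
    ext ω
    rcases hyval ω with h | h <;> simp [A, B, h] <;> norm_num
  have hPB : P B = ENNReal.ofReal (1 / 2) := by
    rw [hBA, prob_compl_eq_one_sub hA, hprior, ← ENNReal.ofReal_one,
      ← ENNReal.ofReal_sub _ (by norm_num)]
    norm_num
  have := cond_isProbabilityMeasure (μ := P) (s := A) (by simp [hprior])
  have := cond_isProbabilityMeasure (μ := P) (s := B) (by simp [hPB])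
  have hplus : P[|A] {ω | ∑ i, Y i ω ≤ 0} ≤ b := by
    simpa only [Fintype.card_fin] using
      measure_sum_nonpos_le_of_signs hcondPlus hYmeas hYval hqPlus fun i ↦ (hq i).1
  have hminus : P[|B] {ω | 0 < ∑ i, Y i ω} ≤ b := by
    simpa only [Fintype.card_fin] using
      measure_sum_pos_le_of_signs hcondMinus hYmeas hYval hqMinus fun i ↦ (hq i).1
  calc P ((A ∩ {ω | ∑ i, Y i ω ≤ 0}) ∪ (B ∩ {ω | 0 < ∑ i, Y i ω}))
      ≤ P (A ∩ {ω | ∑ i, Y i ω ≤ 0}) + P (B ∩ {ω | 0 < ∑ i, Y i ω}) :=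
        measure_union_le _ _
    _ = P[{ω | ∑ i, Y i ω ≤ 0}|A] * P A + P[{ω | 0 < ∑ i, Y i ω}|B] * P B := by
      rw [cond_mul_eq_inter hA, cond_mul_eq_inter hB]
    _ ≤ b * ENNReal.ofReal (1 / 2) + b * ENNReal.ofReal (1 / 2) := by
      rw [hprior, hPB]
      gcongr
    _ = b := by
      rw [← mul_add, ← ENNReal.ofReal_add (by norm_num) (by norm_num)]
      norm_num

/-- Average probability of error of majority voting with a uniform prior on the true label
`y ∈ {−1, 1}`: if, conditionally on each value of `y`, the reported labels `Y i ∈ {−1,1}` are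
independent and agree with `y` with probability `q i ∈ [1/2, 1]`, then the probability of the
majority-vote error event is at most `exp(−(∑ (2 q i − 1))² / (2 s))`. -/
theorem stmt_4 {Ω : Type*} [MeasurableSpace Ω] (P : Measure Ω) [IsProbabilityMeasure P]
    (s : ℕ) (hs : 1 ≤ s) (y : Ω → ℝ) (Y : Fin s → Ω → ℝ) (q : Fin s → ℝ)
    (hq : ∀ i, q i ∈ Set.Icc (1 / 2 : ℝ) 1)
    (hymeas : Measurable y) (hYmeas : ∀ i, Measurable (Y i))
    (hyval : ∀ ω, y ω = -1 ∨ y ω = 1)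
    (hYval : ∀ i ω, Y i ω = -1 ∨ Y i ω = 1)
    (hprior : P {ω | y ω = 1} = ENNReal.ofReal (1 / 2))
    (hcondPlus : iIndepFun Y (P[|{ω | y ω = 1}]))
    (hcondMinus : iIndepFun Y (P[|{ω | y ω = -1}]))
    (hqPlus : ∀ i, (P[|{ω | y ω = 1}]) {ω | Y i ω = 1} = ENNReal.ofReal (q i))
    (hqMinus : ∀ i, (P[|{ω | y ω = -1}]) {ω | Y i ω = -1} = ENNReal.ofReal (q i)) :
    P (({ω | y ω = 1} ∩ {ω | ∑ i, Y i ω ≤ 0}) ∪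
        ({ω | y ω = -1} ∩ {ω | 0 < ∑ i, Y i ω})) ≤
      ENNReal.ofReal (Real.exp (-(∑ i, (2 * q i - 1)) ^ 2 / (2 * s))) :=
  stmt_4_general P s y Y q hq hymeas hYmeas hyval hYval hprior hcondPlus hcondMinus hqPlus hqMinus
end

section
/- Let N = {1,…,n} with true qualities q ∈ [1/2,1]^n, and for each worker i let k_i be a Binomial(m_i, q_i) random variable (the number of correct answers in m_i assigned tasks), with k_1, …, k_n independent. Fix μ ∈ (0,1) and set q̂_i = k_i/m_i, q̂⁺_i = q̂_i + √(ln(2n/μ)/(2m_i)), q̂⁻_i = q̂_i − √(ln(2n/μ)/(2m_i)). Let f assign to each S ⊆ N and q' ∈ ℝ^n a value f_S(q'), satisfying bounded smoothness with strictly increasing continuous h. Let α ∈ ℝ, Δ > 0 be such that |f_S(q) − α| > Δ for all S ⊆ N, let δ > 0 satisfy h(δ) ≤ Δ, and suppose m_i ≥ (2/δ²) ln(2n/μ) for all i. Then with probability at least 1 − μ the following hold simultaneously: (1) for every S ⊆ N with f_S(q) > α, one has f_S(q̂⁺) > α; and (2) for every S ⊆ N with f_S(q) < α, one has f_S(q̂⁻)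 < α. -/
open MeasureTheory ProbabilityTheory Finset Real

/-!
Hoeffding's lemma bounds the Bernoulli moment generating function by `exp (p t + t² / 8)`;
its `m`-th power is the binomial one, so Chernoff's method puts `k i / m i` within `δ / 2` of
`q i` except with probability `2 exp (-m i δ² / 2) ≤ μ / n`, and a union bound over the `n` workers
leaves probability at least `1 − μ`. On that event the confidence radius
`√(ln (2n/μ) / (2 m i))` is at most `δ / 2`, so `q̂⁺` and `q̂⁻` are within `δ` of `q`; bounded
smoothness moves each `f S` by at most `h δ ≤ Δ`, which `Δ`-separation forbids from carrying it
across `α`.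
-/

lemma one_sub_add_mul_exp_le (p : ℝ) (hp0 : 0 ≤ p) (hp1 : p ≤ 1) (t : ℝ) :
    1 - p + p * exp t ≤ exp (p * t + t ^ 2 / 8) := by
  have hoeffding : p * exp (t * (1 - p)) + (1 - p) * exp (-(t * p)) ≤ exp (t ^ 2 / 8) := by
    have := (hasSubgaussianMGF_of_mem_Icc (μ := Ber(true, false, ⟨p, hp0, hp1⟩))
      (X := fun b => if b then (1 : ℝ) else 0) (a := 0) (b := 1) (by fun_prop)
      (ae_of_all _ fun b => by cases b <;> simp)).mgf_le t
    convert this using 2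
    · simp [mgf, integral_bernoulliMeasure]
    · norm_num; ring
  calc 1 - p + p * exp t
      = (p * exp (t * (1 - p)) + (1 - p) * exp (-(t * p))) * exp (p * t) := by
        simp only [add_mul, mul_assoc, ← exp_add]; ring_nf; rw [exp_zero]; ring
    _ ≤ exp (t ^ 2 / 8) * exp (p * t) := by gcongr
    _ = exp (p * t + t ^ 2 / 8) := by rw [← exp_add, add_comm]

def binomialMass (M : ℕ) (p : ℝ) (j : ℕ) : ℝ :=
  M.choose j * p ^ j * (1 - p) ^ (M - j)

section Binomial

variable {M : ℕ} {p : ℝ}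

lemma binomialMass_nonneg (hp0 : 0 ≤ p) (hp1 : p ≤ 1) (j : ℕ) : 0 ≤ binomialMass M p j := by
  have : 0 ≤ 1 - p := by linarith
  unfold binomialMass; positivity

lemma binomialMass_eq_zero_of_lt {j : ℕ} (hj : M < j) : binomialMass M p j = 0 := by
  simp [binomialMass, Nat.choose_eq_zero_of_lt hj]

lemma sum_binomialMass_mul_exp (t : ℝ) :
    ∑ j ∈ range (M + 1), binomialMass M p j * exp (t * j) =
      (1 - p + p * exp t) ^ M := by
  rw [add_comm (1 - p), add_pow]
  refine sum_congr rfl fun j _ => ?_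
  rw [binomialMass, mul_comm t, exp_nat_mul]
  ring

lemma sum_binomialMass_le_exp (hp0 : 0 ≤ p) (hp1 : p ≤ 1) {s : Finset ℕ}
    (hs : s ⊆ range (M + 1)) (t a : ℝ) (hsa : ∀ j ∈ s, t * a ≤ t * j) :
    ∑ j ∈ s, binomialMass M p j ≤ exp (M * (p * t + t ^ 2 / 8) - t * a) := by
  have hw := binomialMass_nonneg (M := M) hp0 hp1
  calc ∑ j ∈ s, binomialMass M p j
      ≤ ∑ j ∈ s, binomialMass M p j * exp (t * j - t * a) := by
        refine sum_le_sum fun j hj => ?_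
        exact le_mul_of_one_le_right (hw j) (Real.one_le_exp (by linarith [hsa j hj]))
    _ ≤ ∑ j ∈ range (M + 1), binomialMass M p j * exp (t * j - t * a) :=
        sum_le_sum_of_subset_of_nonneg hs fun j _ _ => by have := hw j; positivity
    _ = (∑ j ∈ range (M + 1), binomialMass M p j * exp (t * j)) *
          exp (-(t * a)) := by
        simp only [sum_mul, sub_eq_add_neg, exp_add, mul_assoc]
    _ = (1 - p + p * exp t) ^ M * exp (-(t * a)) := by
        rw [sum_binomialMass_mul_exp]
    _ ≤ exp (p * t + t ^ 2 / 8) ^ M * exp (-(t * a)) := by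
        have : 0 ≤ 1 - p + p * exp t := by nlinarith [exp_pos t]
        gcongr
        exact one_sub_add_mul_exp_le p hp0 hp1 t
    _ = exp (M * (p * t + t ^ 2 / 8) - t * a) := by
        rw [← exp_nat_mul, ← exp_add, sub_eq_add_neg]

lemma sum_binomialMass_upper_tail_le (hp0 : 0 ≤ p) (hp1 : p ≤ 1) {s : ℝ} (hs : 0 ≤ s) :
    ∑ j ∈ (range (M + 1)).filter (fun j : ℕ => M * (p + s) ≤ j), binomialMass M p j ≤
      exp (-2 * M * s ^ 2) := by
  refine (sum_binomialMass_le_exp hp0 hp1 (filter_subset _ _) (4 * s) (M * (p + s))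
    fun j hj => ?_).trans_eq (by ring_nf)
  exact mul_le_mul_of_nonneg_left (mem_filter.mp hj).2 (by positivity)

lemma sum_binomialMass_lower_tail_le (hp0 : 0 ≤ p) (hp1 : p ≤ 1) {s : ℝ} (hs : 0 ≤ s) :
    ∑ j ∈ (range (M + 1)).filter (fun j : ℕ => (j : ℝ) ≤ M * (p - s)), binomialMass M p j ≤
      exp (-2 * M * s ^ 2) := by
  refine (sum_binomialMass_le_exp hp0 hp1 (filter_subset _ _) (-(4 * s)) (M * (p - s))
    fun j hj => ?_).trans_eq (by ring_nf)
  exact mul_le_mul_of_nonpos_left (mem_filter.mp hj).2 (by linarith)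

variable {Ω : Type*} [MeasurableSpace Ω] {P : Measure Ω} {k : Ω → ℕ}

lemma measure_le_sum_binomialMass (hp0 : 0 ≤ p) (hp1 : p ≤ 1)
    (hk : ∀ j, P {ω | k ω = j} = ENNReal.ofReal (binomialMass M p j))
    (c : ℕ → Prop) [DecidablePred c] :
    P {ω | c (k ω)} ≤ ENNReal.ofReal (∑ j ∈ (range (M + 1)).filter c, binomialMass M p j) := by
  have hnull : P {ω | M < k ω} = 0 := by
    have : {ω | M < k ω} = ⋃ j : ℕ, {ω | k ω = M + 1 + j} := by
      ext ω; simp only [Set.mem_ofPred_eq, Set.mem_iUnion]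
      exact ⟨fun h => ⟨k ω - (M + 1), by omega⟩, fun ⟨j, hj⟩ => by omega⟩
    rw [this]
    exact measure_iUnion_null fun j => by
      rw [hk, binomialMass_eq_zero_of_lt (by omega), ENNReal.ofReal_zero]
  have hcover : {ω | c (k ω)} ⊆
      (⋃ j ∈ (range (M + 1)).filter c, {ω | k ω = j}) ∪ {ω | M < k ω} := by
    intro ω hω
    by_cases hkM : M < k ω
    · exact Or.inr hkM
    · refine Or.inl (Set.mem_biUnion (x := k ω) ?_ rfl)
      simp only [coe_filter, mem_range, Set.mem_ofPred_eq]
      exact ⟨by omega, hω⟩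
  calc P {ω | c (k ω)}
      ≤ P (⋃ j ∈ (range (M + 1)).filter c, {ω | k ω = j}) + P {ω | M < k ω} :=
        (measure_mono hcover).trans (measure_union_le _ _)
    _ ≤ ∑ j ∈ (range (M + 1)).filter c, P {ω | k ω = j} := by
        rw [hnull, add_zero]; exact measure_biUnion_finset_le _ _
    _ = _ := by
        simp only [hk]
        rw [ENNReal.ofReal_sum_of_nonneg fun j _ => binomialMass_nonneg hp0 hp1 j]

lemma measure_lt_abs_div_sub_le (hM : 0 < M) (hp0 : 0 ≤ p) (hp1 : p ≤ 1)
    (hk : ∀ j, P {ω | k ω = j} = ENNReal.ofReal (binomialMass M p j)) {s : ℝ} (hs : 0 ≤ s) :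
    P {ω | s < |(k ω : ℝ) / M - p|} ≤ ENNReal.ofReal (2 * exp (-2 * M * s ^ 2)) := by
  have hM' : (0 : ℝ) < M := by exact_mod_cast hM
  have hcover : {ω | s < |(k ω : ℝ) / M - p|} ⊆
      {ω | M * (p + s) ≤ (k ω : ℝ)} ∪ {ω | (k ω : ℝ) ≤ M * (p - s)} := by
    intro ω (hω : s < |(k ω : ℝ) / M - p|)
    rcases lt_abs.mp hω with h | h
    · have := (lt_div_iff₀ hM').mp (by linarith : p + s < (k ω : ℝ) / M)
      exact Or.inl (show (M : ℝ) * (p + s) ≤ k ω by linarith)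
    · have := (div_lt_iff₀ hM').mp (by linarith : (k ω : ℝ) / M < p - s)
      exact Or.inr (show (k ω : ℝ) ≤ M * (p - s) by linarith)
  calc P {ω | s < |(k ω : ℝ) / M - p|}
      ≤ P {ω | M * (p + s) ≤ (k ω : ℝ)} + P {ω | (k ω : ℝ) ≤ M * (p - s)} :=
        (measure_mono hcover).trans (measure_union_le _ _)
    _ ≤ ENNReal.ofReal (exp (-2 * M * s ^ 2)) + ENNReal.ofReal (exp (-2 * M * s ^ 2)) := by
        gcongr
        · exact (measure_le_sum_binomialMass hp0 hp1 hk _).trans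
            (ENNReal.ofReal_le_ofReal (sum_binomialMass_upper_tail_le hp0 hp1 hs))
        · exact (measure_le_sum_binomialMass hp0 hp1 hk _).trans
            (ENNReal.ofReal_le_ofReal (sum_binomialMass_lower_tail_le hp0 hp1 hs))
    _ = _ := by rw [← ENNReal.ofReal_add (by positivity) (by positivity), two_mul]

lemma measure_abs_div_sub_le_half_compl_le (hp0 : 0 ≤ p) (hp1 : p ≤ 1)
    (hk : ∀ j, P {ω | k ω = j} = ENNReal.ofReal (binomialMass M p j)) {L δ : ℝ} (hL : 0 < L)
    (hδ : 0 ≤ δ) (hLM : 2 * L ≤ M * δ ^ 2) :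
    P {ω | |(k ω : ℝ) / M - p| ≤ δ / 2}ᶜ ≤ ENNReal.ofReal (2 * exp (-L)) := by
  have hM : 0 < M := Nat.cast_pos.mp (pos_of_mul_pos_left (by linarith) (sq_nonneg δ))
  simp only [Set.compl_ofPred, not_le]
  refine (measure_lt_abs_div_sub_le hM hp0 hp1 hk (by positivity)).trans ?_
  gcongr
  nlinarith

end Binomial

lemma one_sub_le_measure_iInter {Ω ι : Type*} [MeasurableSpace Ω] [Fintype ι]
    (P : Measure Ω) [IsProbabilityMeasure P] (s : ι → Set Ω) {ε : ENNReal}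
    (hs : ∀ i, P (s i)ᶜ ≤ ε / Fintype.card ι) :
    1 - ε ≤ P (⋂ i, s i) := by
  have hunion : ∑ i, P (s i)ᶜ ≤ ε :=
    calc ∑ i, P (s i)ᶜ ≤ ∑ _ : ι, ε / Fintype.card ι := sum_le_sum fun i _ => hs i
      _ ≤ ε := by simpa using ENNReal.mul_div_le
  rw [tsub_le_iff_right]
  calc (1 : ENNReal) = P ((⋂ i, s i) ∪ (⋂ i, s i)ᶜ) := by
        rw [Set.union_compl_self, measure_univ]
    _ ≤ P (⋂ i, s i) + P (⋃ i, (s i)ᶜ) := by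
        rw [Set.compl_iInter]; exact measure_union_le _ _
    _ ≤ P (⋂ i, s i) + ε := by
        gcongr; exact (measure_iUnion_fintype_le P _).trans hunion

lemma same_side_of_abs_sub_le {x y a d : ℝ} (hy : d < |y - a|) (hxy : |x - y| ≤ d) :
    (a < y → a < x) ∧ (y < a → x < a) := by
  rw [abs_le] at hxy
  constructor <;> intro h
  · rw [abs_of_pos (sub_pos.2 h)] at hy; linarith
  · rw [abs_of_neg (sub_neg.2 h)] at hy; linarith

lemma abs_add_sub_le_and_abs_sub_sub_le {x y e d : ℝ} (hxy : |x - y| ≤ d / 2) (he0 : 0 ≤ e)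
    (he : e ≤ d / 2) : |x + e - y| ≤ d ∧ |x - e - y| ≤ d := by
  rw [abs_le] at hxy
  exact ⟨abs_le.2 ⟨by linarith, by linarith⟩, abs_le.2 ⟨by linarith, by linarith⟩⟩

theorem stmt_9_general {Ω : Type*} [MeasurableSpace Ω] (P : Measure Ω) [IsProbabilityMeasure P]
    (n : ℕ) (q : Fin n → ℝ) (hq : ∀ i, q i ∈ Set.Icc (1 / 2 : ℝ) 1)
    (m : Fin n → ℕ) (k : Fin n → Ω → ℕ)
    (hbin : ∀ i j, P {ω | k i ω = j} =
      ENNReal.ofReal (((m i).choose j : ℝ) * q i ^ j * (1 - q i) ^ (m i - j)))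
    (μ : ℝ) (hμ : μ ∈ Set.Ioo (0 : ℝ) 1)
    (f : Finset (Fin n) → (Fin n → ℝ) → ℝ)
    (h : ℝ → ℝ)
    (hbs : ∀ (S : Finset (Fin n)) (q₁ q₂ : Fin n → ℝ) (δ : ℝ),
      (∀ i, |q₁ i - q₂ i| ≤ δ) → |f S q₁ - f S q₂| ≤ h δ)
    (α Δ : ℝ)
    (hsep : ∀ S : Finset (Fin n), Δ < |f S q - α|)
    (δ : ℝ) (hδ : 0 < δ) (hhδ : h δ ≤ Δ)
    (hm : ∀ i, (2 / δ ^ 2) * Real.log (2 * n / μ) ≤ (m i : ℝ)) :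
    ENNReal.ofReal (1 - μ) ≤
      P {ω |
        (∀ S : Finset (Fin n), α < f S q →
          α < f S (fun i =>
            (k i ω : ℝ) / (m i) + Real.sqrt (Real.log (2 * n / μ) / (2 * m i)))) ∧
        (∀ S : Finset (Fin n), f S q < α →
          f S (fun i =>
            (k i ω : ℝ) / (m i) - Real.sqrt (Real.log (2 * n / μ) / (2 * m i))) < α)} := by
  obtain ⟨hμ0, hμ1⟩ := hμ
  set L := Real.log (2 * n / μ)
  have hL_pos (i : Fin n) : 0 < L := Real.log_pos <| by
    have : (1 : ℝ) ≤ n := by exact_mod_cast i.pos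
    rw [lt_div_iff₀ hμ0]; linarith
  have hLm (i : Fin n) : 2 * L ≤ m i * δ ^ 2 := by
    have := hm i
    rw [div_mul_eq_mul_div, div_le_iff₀ (by positivity)] at this
    linarith
  have hexp (i : Fin n) :
      ENNReal.ofReal (2 * exp (-L)) = ENNReal.ofReal μ / Fintype.card (Fin n) := by
    have : (0 : ℝ) < n := by exact_mod_cast i.pos
    rw [Fintype.card_fin, exp_neg, exp_log (by positivity), inv_div, ← ENNReal.ofReal_natCast,
      ← ENNReal.ofReal_div_of_pos this]
    congr 1; field_simp
  have hgood : ENNReal.ofReal (1 - μ) ≤ P (⋂ i, {ω | |(k i ω : ℝ) / m i - q i| ≤ δ / 2}) := by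
    rw [ENNReal.ofReal_sub _ hμ0.le, ENNReal.ofReal_one]
    exact one_sub_le_measure_iInter P _ fun i =>
      (measure_abs_div_sub_le_half_compl_le (by linarith [(hq i).1]) (hq i).2 (hbin i)
        (hL_pos i) hδ.le (hLm i)).trans_eq (hexp i)
  have hradius (i : Fin n) : √(L / (2 * m i)) ≤ δ / 2 := by
    rw [Real.sqrt_le_left (by positivity)]
    exact div_le_of_le_mul₀ (by positivity) (by positivity) (by linarith [hLm i])
  refine hgood.trans (measure_mono fun ω hω => ?_)
  simp only [Set.mem_iInter, Set.mem_ofPred_eq] at hω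
  have hshift (i : Fin n) :=
    abs_add_sub_le_and_abs_sub_sub_le (hω i) (Real.sqrt_nonneg _) (hradius i)
  exact ⟨fun S hS => (same_side_of_abs_sub_le (hsep S)
      ((hbs S _ q δ fun i => (hshift i).1).trans hhδ)).1 hS,
    fun S hS => (same_side_of_abs_sub_le (hsep S)
      ((hbs S _ q δ fun i => (hshift i).2).trans hhδ)).2 hS⟩

/-- With probability at least `1 − μ`, the upper confidence bounds `q̂⁺` classify as infeasible
every subset whose true error exceeds `α`, and the lower confidence bounds `q̂⁻` classify as
feasible every subset whose true error is below `α`, provided each worker `i` has been assigned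
`m i ≥ (2/δ²) ln(2n/μ)` tasks, where `h δ ≤ Δ` and `q` is `Δ`-separated from `α`. -/
theorem stmt_9 {Ω : Type*} [MeasurableSpace Ω] (P : Measure Ω) [IsProbabilityMeasure P]
    (n : ℕ) (hn : 1 ≤ n) (q : Fin n → ℝ) (hq : ∀ i, q i ∈ Set.Icc (1 / 2 : ℝ) 1)
    (m : Fin n → ℕ) (k : Fin n → Ω → ℕ)
    (hmeas : ∀ i, Measurable (k i))
    (hind : iIndepFun k P)
    (hbin : ∀ i j, P {ω | k i ω = j} =
      ENNReal.ofReal (((m i).choose j : ℝ) * q i ^ j * (1 - q i) ^ (m i - j)))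
    (μ : ℝ) (hμ : μ ∈ Set.Ioo (0 : ℝ) 1)
    (f : Finset (Fin n) → (Fin n → ℝ) → ℝ)
    (h : ℝ → ℝ) (hhmono : StrictMono h) (hhcont : Continuous h)
    (hbs : ∀ (S : Finset (Fin n)) (q₁ q₂ : Fin n → ℝ) (δ : ℝ),
      (∀ i, |q₁ i - q₂ i| ≤ δ) → |f S q₁ - f S q₂| ≤ h δ)
    (α Δ : ℝ) (hΔ : 0 < Δ)
    (hsep : ∀ S : Finset (Fin n), Δ < |f S q - α|)
    (δ : ℝ) (hδ : 0 < δ) (hhδ : h δ ≤ Δ)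
    (hm : ∀ i, (2 / δ ^ 2) * Real.log (2 * n / μ) ≤ (m i : ℝ)) :
    ENNReal.ofReal (1 - μ) ≤
      P {ω |
        (∀ S : Finset (Fin n), α < f S q →
          α < f S (fun i =>
            (k i ω : ℝ) / (m i) + Real.sqrt (Real.log (2 * n / μ) / (2 * m i)))) ∧
        (∀ S : Finset (Fin n), f S q < α →
          f S (fun i =>
            (k i ω : ℝ) / (m i) - Real.sqrt (Real.log (2 * n / μ) / (2 * m i))) < α)} :=
  stmt_9_general P n q hq m k hbin μ hμ f h hbs α Δ hsep δ hδ hhδ hm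
end

section
/- Let N = {1,…,n}, let c_i ≥ 0 be the cost of worker i, and write C(S) = ∑_{i∈S} c_i. Let f assign to each S ⊆ N and q' ∈ ℝ^n a value f_S(q'), and suppose f is antitone in the qualities: for all S, if q'_i ≤ q_i for every i then f_S(q) ≤ f_S(q'). Let q, q̂⁻, q̂⁺ ∈ ℝ^n satisfy q̂⁻_i ≤ q_i ≤ q̂⁺_i for all i. Let α ∈ ℝ, suppose the feasible family {S ⊆ N : f_S(q) < α} is nonempty, let S* minimize C(S) over {S : f_S(q) < α}, and let S' minimize C(S) over {S : f_S(q̂⁺) < α}. If moreover f_{S'}(q̂⁻) < α, then C(S') = C(S*); in particular S' is a minimum-cost set satisfying the accuracy constraint f_S(q) < α with respect to the true qualities. -/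
/-- If `S'` minimizes cost subject to feasibility under the upper confidence bounds and is
moreover feasible under the lower confidence bounds, then `S'` has the same cost as a
minimum-cost set `Sstar` that is feasible with respect to the true qualities. -/
theorem stmt_10 (n : ℕ) (c : Fin n → ℝ) (hc : ∀ i, 0 ≤ c i)
    (f : Finset (Fin n) → (Fin n → ℝ) → ℝ)
    (hanti : ∀ (S : Finset (Fin n)) (q₁ q₂ : Fin n → ℝ),
      (∀ i, q₁ i ≤ q₂ i) → f S q₂ ≤ f S q₁)
    (q qlo qhi : Fin n → ℝ)
    (hlo : ∀ i, qlo i ≤ q i) (hhi : ∀ i, q i ≤ qhi i)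
    (α : ℝ) (Sstar S' : Finset (Fin n))
    (hfeas : f Sstar q < α)
    (hopt : ∀ S : Finset (Fin n), f S q < α → ∑ i ∈ Sstar, c i ≤ ∑ i ∈ S, c i)
    (hfeas' : f S' qhi < α)
    (hopt' : ∀ S : Finset (Fin n), f S qhi < α → ∑ i ∈ S', c i ≤ ∑ i ∈ S, c i)
    (hlcb : f S' qlo < α) :
    ∑ i ∈ S', c i = ∑ i ∈ Sstar, c i := by
  have h1 : ∑ i ∈ S', c i ≤ ∑ i ∈ Sstar, c i :=
    hopt' Sstar (lt_of_le_of_lt (hanti Sstar q qhi hhi) hfeas)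
  have h2 : ∑ i ∈ Sstar, c i ≤ ∑ i ∈ S', c i :=
    hopt S' (lt_of_le_of_lt (hanti S' qlo q hlo) hlcb)
  linarith
end

section
/- Consider the greedy algorithm GA for the minimum knapsack problem (items with costs c_i ≥ 0 and sizes a_i > 0, demand M with ∑_i a_i ≥ M; items scanned in nondecreasing order of c_i/a_i with ties broken by index; an item is accepted as 'small' if adding it keeps the accumulated small size strictly below M and is 'big' otherwise; GA outputs the minimum-cost set among the candidates (S_0 ∪ … ∪ S_l) ∪ {j} with j a big item in the l-th run B_l of big items, where S_0, S_1, … are the consecutive groups of small items). Then the allocation given by GA is monotone in cost: if item i belongs to the set output by GA when its cost is c_i, and the costs and sizes of all other items are held fixed, then item i also belongs to the set output by GA when its cost is any c_i⁻ with 0 ≤ c_i⁻ < c_i. -/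
open scoped Classical

/-- Monotonicity of the greedy minimum-knapsack allocation in each item's cost.
For a cost vector `b`, items are scanned in increasing ratio `b i / a i` (ties broken by
index), which is encoded by the strict precedence relation `before b`; `small` marks the items
accepted as small in the scan for costs `c`, and `small'` the ones for the costs `c'` obtained
from `c` by lowering the cost of item `i0`; GA outputs the candidate set of the first big item
achieving minimum candidate cost.  If `i0` belongs to GA's output under costs `c`, then `i0`
also belongs to GA's output under costs `c'`. -/
theorem stmt_14 (n : ℕ) (a : Fin n → ℝ) (M : ℝ)
    (ha : ∀ i, 0 < a i) (hM : M ≤ ∑ i, a i)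
    (c c' : Fin n → ℝ) (hc : ∀ i, 0 ≤ c i)
    (i0 : Fin n) (hc'pos : 0 ≤ c' i0) (hlow : c' i0 < c i0)
    (hsame : ∀ j : Fin n, j ≠ i0 → c' j = c j)
    (before : (Fin n → ℝ) → Fin n → Fin n → Prop)
    (hbefore : ∀ (b : Fin n → ℝ) (i j : Fin n), before b i j ↔
      (b i / a i < b j / a j ∨ (b i / a i = b j / a j ∧ i < j)))
    (small small' : Fin n → Prop)
    (hsmall : ∀ j : Fin n, small j ↔
      (∑ i ∈ Finset.univ.filter (fun i : Fin n => before c i j ∧ small i), a i) + a j < M)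
    (hsmall' : ∀ j : Fin n, small' j ↔
      (∑ i ∈ Finset.univ.filter (fun i : Fin n => before c' i j ∧ small' i), a i) + a j < M)
    (jstar : Fin n) (hbig : ¬ small jstar)
    (hmin : ∀ j : Fin n, ¬ small j →
      (∑ i ∈ insert jstar (Finset.univ.filter (fun i : Fin n => before c i jstar ∧ small i)), c i) ≤
        ∑ i ∈ insert j (Finset.univ.filter (fun i : Fin n => before c i j ∧ small i)), c i)
    (htie : ∀ j : Fin n, ¬ small j →
      (∑ i ∈ insert j (Finset.univ.filter (fun i : Fin n => before c i j ∧ small i)), c i) =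
        (∑ i ∈ insert jstar (Finset.univ.filter (fun i : Fin n => before c i jstar ∧ small i)), c i)
      → ¬ before c j jstar)
    (jstar' : Fin n) (hbig' : ¬ small' jstar')
    (hmin' : ∀ j : Fin n, ¬ small' j →
      (∑ i ∈ insert jstar' (Finset.univ.filter (fun i : Fin n => before c' i jstar' ∧ small' i)), c' i) ≤
        ∑ i ∈ insert j (Finset.univ.filter (fun i : Fin n => before c' i j ∧ small' i)), c' i)
    (htie' : ∀ j : Fin n, ¬ small' j →
      (∑ i ∈ insert j (Finset.univ.filter (fun i : Fin n => before c' i j ∧ small' i)), c' i) =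
        (∑ i ∈ insert jstar' (Finset.univ.filter (fun i : Fin n => before c' i jstar' ∧ small' i)), c' i)
      → ¬ before c' j jstar')
    (hi0 : i0 ∈ insert jstar
      (Finset.univ.filter (fun i : Fin n => before c i jstar ∧ small i))) :
    i0 ∈ insert jstar'
      (Finset.univ.filter (fun i : Fin n => before c' i jstar' ∧ small' i)) := by
  classical
  by_contra hout
  -- Basic properties of the precedence relation
  have btrans : ∀ (b : Fin n → ℝ) {x y z : Fin n}, before b x y → before b y z → before b x z := by
    intro b x y z hxy hyz
    rw [hbefore] at hxy hyz ⊢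
    rcases hxy with h1 | ⟨h1, h1'⟩ <;> rcases hyz with h2 | ⟨h2, h2'⟩
    · exact Or.inl (h1.trans h2)
    · exact Or.inl (h1.trans_eq h2)
    · exact Or.inl (h1.trans_lt h2)
    · exact Or.inr ⟨h1.trans h2, h1'.trans h2'⟩
  have birrefl : ∀ (b : Fin n → ℝ) (x : Fin n), ¬ before b x x := by
    intro b x hx
    rw [hbefore] at hx
    rcases hx with h | ⟨_, h⟩
    · exact lt_irrefl _ h
    · exact lt_irrefl _ h
  have basym : ∀ (b : Fin n → ℝ) {x y : Fin n}, before b x y → ¬ before b y x :=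
    fun b _ _ h h' => birrefl b _ (btrans b h h')
  have btot : ∀ (b : Fin n → ℝ) {x y : Fin n}, x ≠ y → before b x y ∨ before b y x := by
    intro b x y hxy
    rw [hbefore b x y, hbefore b y x]
    rcases lt_trichotomy (b x / a x) (b y / a y) with h | h | h
    · exact Or.inl (Or.inl h)
    · rcases hxy.lt_or_gt with h' | h'
      · exact Or.inl (Or.inr ⟨h, h'⟩)
      · exact Or.inr (Or.inr ⟨h.symm, h'⟩)
    · exact Or.inr (Or.inl h)
  have hrat : c' i0 / a i0 < c i0 / a i0 := div_lt_div_of_pos_right hlow (ha i0)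
  have up : ∀ {y : Fin n}, before c i0 y → before c' i0 y := by
    intro y hy
    have hyne : y ≠ i0 := by rintro rfl; exact birrefl c _ hy
    rw [hbefore] at hy ⊢
    rw [hsame y hyne]
    rcases hy with h | ⟨h, _⟩
    · exact Or.inl (hrat.trans h)
    · exact Or.inl (hrat.trans_eq h)
  have down : ∀ {x : Fin n}, before c' x i0 → before c x i0 := by
    intro x hx
    have hxne : x ≠ i0 := by rintro rfl; exact birrefl c' _ hx
    rw [hbefore] at hx ⊢
    rw [hsame x hxne] at hx
    rcases hx with h | ⟨h, _⟩
    · exact Or.inl (h.trans hrat)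
    · exact Or.inl (h.trans_lt hrat)
  have same2 : ∀ {x y : Fin n}, x ≠ i0 → y ≠ i0 → (before c' x y ↔ before c x y) := by
    intro x y hx hy
    rw [hbefore, hbefore, hsame x hx, hsame y hy]
  -- rank function with respect to the c'-order
  set rk : Fin n → ℕ := fun k => (Finset.univ.filter (fun y : Fin n => before c' y k)).card with hrkdef
  have rk_lt : ∀ {x k : Fin n}, before c' x k → rk x < rk k := by
    intro x k hxk
    have hsub : (Finset.univ.filter (fun y : Fin n => before c' y x)) ⊆
        Finset.univ.filter (fun y : Fin n => before c' y k) := by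
      intro y hy
      simp only [Finset.mem_filter, Finset.mem_univ, true_and] at hy ⊢
      exact btrans c' hy hxk
    refine Finset.card_lt_card ((Finset.ssubset_iff_of_subset hsub).mpr ⟨x, ?_, ?_⟩)
    · simp [hxk]
    · simpa using birrefl c' x
  -- Lemma 1 : items strictly before i0 in the c'-order have unchanged status
  have L1 : ∀ k : Fin n, before c' k i0 → (small k ↔ small' k) := by
    suffices h : ∀ (m : ℕ) (k : Fin n), rk k < m → before c' k i0 → (small k ↔ small' k) by
      intro k hk; exact h (rk k + 1) k (Nat.lt_succ_self _) hk
    intro m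
    induction m with
    | zero => intro k hk; omega
    | succ m ih =>
      intro k hk hki0
      have hkne : k ≠ i0 := by rintro rfl; exact birrefl c' _ hki0
      have hsets : (Finset.univ.filter (fun i : Fin n => before c i k ∧ small i))
          = Finset.univ.filter (fun i : Fin n => before c' i k ∧ small' i) := by
        ext x
        simp only [Finset.mem_filter, Finset.mem_univ, true_and]
        constructor
        · rintro ⟨hbx, hsx⟩
          have hxne : x ≠ i0 := by
            rintro rfl
            exact basym c hbx (down hki0)
          have hb' : before c' x k := (same2 hxne hkne).mpr hbx
          have hx' : before c' x i0 := btrans c' hb' hki0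
          exact ⟨hb', (ih x (lt_of_lt_of_le (rk_lt hb') (Nat.lt_succ_iff.mp hk)) hx').mp hsx⟩
        · rintro ⟨hbx, hsx⟩
          have hxne : x ≠ i0 := by
            rintro rfl
            exact basym c' hki0 hbx
          have hx' : before c' x i0 := btrans c' hbx hki0
          exact ⟨(same2 hxne hkne).mp hbx,
            (ih x (lt_of_lt_of_le (rk_lt hbx) (Nat.lt_succ_iff.mp hk)) hx').mpr hsx⟩
      rw [hsmall k, hsmall' k, hsets]
  -- basic consequences of hout
  have hnotj : i0 ≠ jstar' := fun h => hout (by rw [h]; exact Finset.mem_insert_self _ _)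
  have hnotS : ¬ (before c' i0 jstar' ∧ small' i0) := fun h =>
    hout (Finset.mem_insert.mpr (Or.inr (Finset.mem_filter.mpr ⟨Finset.mem_univ _, h⟩)))
  -- Step 1 : if jstar' comes before i0 in the new order, its candidate cost strictly
  -- exceeds that of jstar under the old costs
  have step1 : before c' jstar' i0 → before c jstar' jstar →
      (∑ i ∈ insert jstar (Finset.univ.filter (fun i : Fin n => before c i jstar ∧ small i)), c i) <
      ∑ i ∈ insert jstar' (Finset.univ.filter (fun i : Fin n => before c' i jstar' ∧ small' i)), c' i := by
    intro hj'lt hjj'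
    have hj'ne : jstar' ≠ i0 := by rintro rfl; exact birrefl c' _ hj'lt
    have hsets : (Finset.univ.filter (fun i : Fin n => before c' i jstar' ∧ small' i))
        = Finset.univ.filter (fun i : Fin n => before c i jstar' ∧ small i) := by
      ext x
      simp only [Finset.mem_filter, Finset.mem_univ, true_and]
      constructor
      · rintro ⟨hb, hs⟩
        have hxne : x ≠ i0 := by rintro rfl; exact basym c' hb hj'lt
        exact ⟨(same2 hxne hj'ne).mp hb, (L1 x (btrans c' hb hj'lt)).mpr hs⟩
      · rintro ⟨hb, hs⟩
        have hxne : x ≠ i0 := by rintro rfl; exact basym c' (up hb) hj'lt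
        have hb' : before c' x jstar' := (same2 hxne hj'ne).mpr hb
        exact ⟨hb', (L1 x (btrans c' hb' hj'lt)).mp hs⟩
    have hsumeq : (∑ i ∈ insert jstar' (Finset.univ.filter (fun i : Fin n => before c' i jstar' ∧ small' i)), c' i)
        = ∑ i ∈ insert jstar' (Finset.univ.filter (fun i : Fin n => before c i jstar' ∧ small i)), c i := by
      rw [hsets]
      refine Finset.sum_congr rfl fun x hx => ?_
      rcases Finset.mem_insert.mp hx with rfl | hx
      · exact hsame _ hj'ne
      · simp only [Finset.mem_filter, Finset.mem_univ, true_and] at hx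
        refine hsame x ?_
        rintro rfl
        exact basym c' (up hx.1) hj'lt
    have hnsmall : ¬ small jstar' := fun hs => hbig' ((L1 jstar' hj'lt).mp hs)
    rw [hsumeq]
    rcases lt_or_eq_of_le (hmin jstar' hnsmall) with h | h
    · exact h
    · exact absurd hjj' (htie jstar' hnsmall h.symm)
  -- Lemma 2 : if i0 was small, it stays small
  have L2aux : (Finset.univ.filter (fun i : Fin n => before c' i i0 ∧ small' i)) ⊆
      Finset.univ.filter (fun i : Fin n => before c i i0 ∧ small i) := by
    intro x hx
    simp only [Finset.mem_filter, Finset.mem_univ, true_and] at hx ⊢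
    exact ⟨down hx.1, (L1 x hx.1).mpr hx.2⟩
  have L2 : small i0 → small' i0 := by
    intro hsi0
    rw [hsmall']
    have h1 := (hsmall i0).mp hsi0
    have h2 : (∑ i ∈ Finset.univ.filter (fun i : Fin n => before c' i i0 ∧ small' i), a i) ≤
        ∑ i ∈ Finset.univ.filter (fun i : Fin n => before c i i0 ∧ small i), a i :=
      Finset.sum_le_sum_of_subset_of_nonneg L2aux (fun i _ _ => (ha i).le)
    linarith
  -- the "global overflow" contradiction in the case where i0 was big but becomes small
  have Mcontra : ¬ small i0 → small' i0 →
      (∀ m : Fin n, before c m i0 → (small m ↔ small' m)) → False := by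
    intro hnsi0 hs'i0 hall
    have hXne : (Finset.univ.filter (fun x : Fin n => small' x)).Nonempty :=
      ⟨i0, by simp [hs'i0]⟩
    obtain ⟨z, hzX, hzmax⟩ := Finset.exists_max_image _ rk hXne
    have hz : small' z := by simpa using hzX
    have hsub1 : (Finset.univ.filter (fun x : Fin n => small' x)).erase z ⊆
        Finset.univ.filter (fun i : Fin n => before c' i z ∧ small' i) := by
      intro x hx
      obtain ⟨hxz, hxX⟩ := Finset.mem_erase.mp hx
      have hxs : small' x := by simpa using hxX
      have hbz : before c' x z := by
        rcases btot c' hxz with h | h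
        · exact h
        · exact absurd (hzmax x hxX) (not_le.mpr (rk_lt h))
      simp [hbz, hxs]
    have h2 := (hsmall' z).mp hz
    have h2' := Finset.sum_le_sum_of_subset_of_nonneg hsub1 (fun i _ _ => (ha i).le)
    have h3 : (∑ x ∈ Finset.univ.filter (fun x : Fin n => small' x), a x) < M := by
      rw [← Finset.sum_erase_add _ _ hzX]
      linarith
    have hi0nf : i0 ∉ Finset.univ.filter (fun i : Fin n => before c i i0 ∧ small i) := by
      simp [birrefl c i0]
    have hsub2 : insert i0 (Finset.univ.filter (fun i : Fin n => before c i i0 ∧ small i)) ⊆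
        Finset.univ.filter (fun x : Fin n => small' x) := by
      intro x hx
      rcases Finset.mem_insert.mp hx with rfl | hx
      · simp [hs'i0]
      · simp only [Finset.mem_filter, Finset.mem_univ, true_and] at hx ⊢
        exact (hall x hx.1).mp hx.2
    have h4 : M ≤ (∑ i ∈ Finset.univ.filter (fun i : Fin n => before c i i0 ∧ small i), a i) + a i0 :=
      not_lt.mp (fun h => hnsi0 ((hsmall i0).mpr h))
    have h5 : (∑ i ∈ insert i0 (Finset.univ.filter (fun i : Fin n => before c i i0 ∧ small i)), a i)
        = (∑ i ∈ Finset.univ.filter (fun i : Fin n => before c i i0 ∧ small i), a i) + a i0 := by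
      rw [Finset.sum_insert hi0nf]; ring
    have h6 := Finset.sum_le_sum_of_subset_of_nonneg hsub2 (fun i _ _ => (ha i).le)
    linarith
  -- Analysis of the first divergence item k
  have divstep : ∀ k : Fin n, k ≠ i0 → small' i0 → before c k i0 → before c' i0 k →
      (∀ x : Fin n, x ≠ i0 → before c' x k → (small x ↔ small' x)) →
      ¬ (small k ↔ small' k) →
      (small k ∧ ¬ small' k ∧
        (Finset.univ.filter (fun i : Fin n => before c' i k ∧ small' i))
          = insert i0 (Finset.univ.filter (fun i : Fin n => before c i k ∧ small i))) := by
    intro k hk1 hs'i0 hki0 h'i0k hmineq hk2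
    have hset : (Finset.univ.filter (fun i : Fin n => before c' i k ∧ small' i))
        = insert i0 (Finset.univ.filter (fun i : Fin n => before c i k ∧ small i)) := by
      ext x
      simp only [Finset.mem_filter, Finset.mem_insert, Finset.mem_univ, true_and]
      constructor
      · rintro ⟨hb, hs⟩
        by_cases hx : x = i0
        · exact Or.inl hx
        · exact Or.inr ⟨(same2 hx hk1).mp hb, (hmineq x hx hb).mpr hs⟩
      · rintro (rfl | ⟨hb, hs⟩)
        · exact ⟨h'i0k, hs'i0⟩
        · have hx : x ≠ i0 := by rintro rfl; exact basym c hb hki0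
          have hb' := (same2 hx hk1).mpr hb
          exact ⟨hb', (hmineq x hx hb').mp hs⟩
    have hi0nfk : i0 ∉ Finset.univ.filter (fun i : Fin n => before c i k ∧ small i) := by
      simp only [Finset.mem_filter, Finset.mem_univ, true_and, not_and]
      intro h; exact absurd h (basym c hki0)
    have himp : small' k → small k := by
      intro h
      have h1 := (hsmall' k).mp h
      rw [hset, Finset.sum_insert hi0nfk] at h1
      rw [hsmall k]
      have := ha i0
      linarith
    have hsk : small k := by
      by_contra h
      exact hk2 (iff_of_false h (fun h' => h (himp h')))
    exact ⟨hsk, fun h' => hk2 (iff_of_true (himp h') h'), hset⟩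
  -- the contradiction obtained from a first divergence item before i0 in the old order
  have bound_contra : ∀ k : Fin n, small k → ¬ small' k →
      before c k i0 → before c' i0 k → before c k jstar →
      ((Finset.univ.filter (fun i : Fin n => before c' i k ∧ small' i))
        = insert i0 (Finset.univ.filter (fun i : Fin n => before c i k ∧ small i))) →
      before c' jstar' i0 → before c jstar' jstar → False := by
    intro k hsk hs'k hki0 h'i0k hkj hset hj'lt hjj'
    have hstrict := step1 hj'lt hjj'
    have hkne : k ≠ i0 := by rintro rfl; exact birrefl c' _ h'i0k
    have hi0nk : i0 ∉ Finset.univ.filter (fun i : Fin n => before c i k ∧ small i) := by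
      simp only [Finset.mem_filter, Finset.mem_univ, true_and, not_and]
      intro h; exact absurd h (basym c hki0)
    have hknS : k ∉ insert i0 (Finset.univ.filter (fun i : Fin n => before c i k ∧ small i)) := by
      simp [hkne, birrefl c k]
    have hsum1 : (∑ i ∈ insert k (Finset.univ.filter (fun i : Fin n => before c' i k ∧ small' i)), c' i)
        = c k + (c' i0 + ∑ i ∈ Finset.univ.filter (fun i : Fin n => before c i k ∧ small i), c i) := by
      rw [hset, Finset.sum_insert hknS, Finset.sum_insert hi0nk, hsame k hkne]
      congr 2
      refine Finset.sum_congr rfl fun x hx => hsame x ?_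
      rintro rfl
      exact absurd (Finset.mem_filter.mp hx).2.1 (basym c hki0)
    have hsub : insert i0 (insert k (Finset.univ.filter (fun i : Fin n => before c i k ∧ small i)))
        ⊆ insert jstar (Finset.univ.filter (fun i : Fin n => before c i jstar ∧ small i)) := by
      intro x hx
      rcases Finset.mem_insert.mp hx with rfl | hx
      · exact hi0
      rcases Finset.mem_insert.mp hx with rfl | hx
      · exact Finset.mem_insert.mpr (Or.inr (Finset.mem_filter.mpr ⟨Finset.mem_univ _, hkj, hsk⟩))
      · simp only [Finset.mem_filter, Finset.mem_univ, true_and] at hx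
        exact Finset.mem_insert.mpr (Or.inr (Finset.mem_filter.mpr
          ⟨Finset.mem_univ _, btrans c hx.1 hkj, hx.2⟩))
    have hi0nk2 : i0 ∉ insert k (Finset.univ.filter (fun i : Fin n => before c i k ∧ small i)) := by
      simp only [Finset.mem_insert]
      push_neg
      exact ⟨fun h => hkne h.symm, hi0nk⟩
    have hknF : k ∉ Finset.univ.filter (fun i : Fin n => before c i k ∧ small i) := by
      simp [birrefl c k]
    have hsum2 : c i0 + (c k + ∑ i ∈ Finset.univ.filter (fun i : Fin n => before c i k ∧ small i), c i)
        ≤ ∑ i ∈ insert jstar (Finset.univ.filter (fun i : Fin n => before c i jstar ∧ small i)), c i := by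
      rw [← Finset.sum_insert hknF, ← Finset.sum_insert hi0nk2]
      exact Finset.sum_le_sum_of_subset_of_nonneg hsub fun i _ _ => hc i
    have hmink := hmin' k hs'k
    linarith
  -- Main case analysis
  rcases Finset.mem_insert.mp hi0 with hAeq | hBmem
  · -- Case A : i0 = jstar was the big winner
    subst hAeq
    by_cases hs'i0 : small' i0
    · -- Case A1 : i0 becomes small
      have hnb : ¬ before c' i0 jstar' := fun h => hnotS ⟨h, hs'i0⟩
      have hj'lt : before c' jstar' i0 := (btot c' hnotj).resolve_left hnb
      have hjj' : before c jstar' i0 := down hj'lt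
      rcases (Finset.univ.filter
          (fun k : Fin n => ¬ (small k ↔ small' k) ∧ k ≠ i0)).eq_empty_or_nonempty with hDe | hDne
      · refine Mcontra hbig hs'i0 ?_
        intro m hm
        by_contra hne
        have hmne : m ≠ i0 := by rintro rfl; exact birrefl c _ hm
        exact Finset.eq_empty_iff_forall_notMem.mp hDe m
          (Finset.mem_filter.mpr ⟨Finset.mem_univ _, hne, hmne⟩)
      · obtain ⟨k, hkD, hkmin⟩ := Finset.exists_min_image _ rk hDne
        obtain ⟨-, hk2, hk1⟩ := Finset.mem_filter.mp hkD
        have hk3 : before c' i0 k := by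
          rcases btot c' (Ne.symm hk1) with h | h
          · exact h
          · exact absurd (L1 k h) hk2
        have hmineq : ∀ x : Fin n, x ≠ i0 → before c' x k → (small x ↔ small' x) := by
          intro x hx hxk
          by_contra hne
          have hxD : x ∈ Finset.univ.filter (fun k : Fin n => ¬ (small k ↔ small' k) ∧ k ≠ i0) :=
            Finset.mem_filter.mpr ⟨Finset.mem_univ _, hne, hx⟩
          exact absurd (rk_lt hxk) (not_lt.mpr (hkmin x hxD))
        rcases btot c hk1 with hki0 | hi0k
        · obtain ⟨hsk, hs'k, hset⟩ := divstep k hk1 hs'i0 hki0 hk3 hmineq hk2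
          exact bound_contra k hsk hs'k hki0 hk3 hki0 hset hj'lt hjj'
        · refine Mcontra hbig hs'i0 ?_
          intro m hm
          have hmne : m ≠ i0 := by rintro rfl; exact birrefl c _ hm
          by_contra hne
          have hmD : m ∈ Finset.univ.filter (fun k : Fin n => ¬ (small k ↔ small' k) ∧ k ≠ i0) :=
            Finset.mem_filter.mpr ⟨Finset.mem_univ _, hne, hmne⟩
          have h1 : before c m k := btrans c hm hi0k
          have h2 : before c' m k := (same2 hmne hk1).mpr h1
          exact absurd (rk_lt h2) (not_lt.mpr (hkmin m hmD))
    · -- Case A2 : i0 stays big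
      have hsubF := L2aux
      have hi0nf1 : i0 ∉ Finset.univ.filter (fun i : Fin n => before c' i i0 ∧ small' i) := by
        simp [birrefl c' i0]
      have hi0nf2 : i0 ∉ Finset.univ.filter (fun i : Fin n => before c i i0 ∧ small i) := by
        simp [birrefl c i0]
      have hgi0 : (∑ i ∈ insert i0 (Finset.univ.filter (fun i : Fin n => before c' i i0 ∧ small' i)), c' i)
          ≤ c' i0 + ∑ i ∈ Finset.univ.filter (fun i : Fin n => before c i i0 ∧ small i), c i := by
        rw [Finset.sum_insert hi0nf1]
        have he : (∑ i ∈ Finset.univ.filter (fun i : Fin n => before c' i i0 ∧ small' i), c' i)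
            = ∑ i ∈ Finset.univ.filter (fun i : Fin n => before c' i i0 ∧ small' i), c i := by
          refine Finset.sum_congr rfl fun x hx => hsame x ?_
          rintro rfl
          exact birrefl c' _ (Finset.mem_filter.mp hx).2.1
        rw [he]
        have := Finset.sum_le_sum_of_subset_of_nonneg hsubF (fun i _ _ => hc i)
        linarith
      have hgc : (∑ i ∈ insert i0 (Finset.univ.filter (fun i : Fin n => before c i i0 ∧ small i)), c i)
          = c i0 + ∑ i ∈ Finset.univ.filter (fun i : Fin n => before c i i0 ∧ small i), c i :=
        Finset.sum_insert hi0nf2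
      have hmini0 := hmin' i0 hs'i0
      rcases btot c' hnotj with h'i0j | hj'lt
      · -- i0 comes before jstar' in the new order
        have hstrict2 : (∑ i ∈ insert jstar' (Finset.univ.filter (fun i : Fin n => before c' i jstar' ∧ small' i)), c' i)
            < ∑ i ∈ insert i0 (Finset.univ.filter (fun i : Fin n => before c' i i0 ∧ small' i)), c' i := by
          rcases lt_or_eq_of_le hmini0 with h | h
          · exact h
          · exact absurd h'i0j (htie' i0 hs'i0 h.symm)
        -- all statuses are unchanged in this case
        have hall2 : ∀ m : Fin n, m ≠ i0 → (small m ↔ small' m) := by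
          suffices h : ∀ (N : ℕ) (m : Fin n), rk m < N → m ≠ i0 → (small m ↔ small' m) by
            intro m hm; exact h (rk m + 1) m (Nat.lt_succ_self _) hm
          intro N
          induction N with
          | zero => intro m hm; omega
          | succ N ih =>
            intro m hm hmne
            have hsets : (Finset.univ.filter (fun i : Fin n => before c i m ∧ small i))
                = Finset.univ.filter (fun i : Fin n => before c' i m ∧ small' i) := by
              ext x
              simp only [Finset.mem_filter, Finset.mem_univ, true_and]
              constructor
              · rintro ⟨hb, hs⟩
                have hxne : x ≠ i0 := by rintro rfl; exact hbig hs
                have hb' := (same2 hxne hmne).mpr hb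
                exact ⟨hb', (ih x (lt_of_lt_of_le (rk_lt hb') (Nat.lt_succ_iff.mp hm)) hxne).mp hs⟩
              · rintro ⟨hb, hs⟩
                have hxne : x ≠ i0 := by rintro rfl; exact hs'i0 hs
                exact ⟨(same2 hxne hmne).mp hb,
                  (ih x (lt_of_lt_of_le (rk_lt hb) (Nat.lt_succ_iff.mp hm)) hxne).mpr hs⟩
            rw [hsmall m, hsmall' m, hsets]
        have hj'ne : jstar' ≠ i0 := Ne.symm hnotj
        have hnsj' : ¬ small jstar' := fun h => hbig' ((hall2 jstar' hj'ne).mp h)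
        have hminj' := hmin jstar' hnsj'
        have hsets3 : (Finset.univ.filter (fun i : Fin n => before c' i jstar' ∧ small' i))
            = Finset.univ.filter (fun i : Fin n => before c i jstar' ∧ small i) := by
          ext x
          simp only [Finset.mem_filter, Finset.mem_univ, true_and]
          constructor
          · rintro ⟨hb, hs⟩
            have hxne : x ≠ i0 := by rintro rfl; exact hs'i0 hs
            exact ⟨(same2 hxne hj'ne).mp hb, (hall2 x hxne).mpr hs⟩
          · rintro ⟨hb, hs⟩
            have hxne : x ≠ i0 := by rintro rfl; exact hbig hs
            exact ⟨(same2 hxne hj'ne).mpr hb, (hall2 x hxne).mp hs⟩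
        have hsum3 : (∑ i ∈ insert jstar' (Finset.univ.filter (fun i : Fin n => before c' i jstar' ∧ small' i)), c' i)
            = ∑ i ∈ insert jstar' (Finset.univ.filter (fun i : Fin n => before c i jstar' ∧ small i)), c i := by
          rw [hsets3]
          refine Finset.sum_congr rfl fun x hx => hsame x ?_
          rcases Finset.mem_insert.mp hx with rfl | hx
          · exact hj'ne
          · rintro rfl; exact hbig (Finset.mem_filter.mp hx).2.2
        linarith
      · -- jstar' comes before i0 in the new order
        have hstrict := step1 hj'lt (down hj'lt)
        linarith
  · -- Case B : i0 was a small item of the winning candidate set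
    have hBf := Finset.mem_filter.mp hBmem
    have hbi0 : before c i0 jstar := hBf.2.1
    have hsi0 : small i0 := hBf.2.2
    have hs'i0 : small' i0 := L2 hsi0
    have hnb : ¬ before c' i0 jstar' := fun h => hnotS ⟨h, hs'i0⟩
    have hj'lt : before c' jstar' i0 := (btot c' hnotj).resolve_left hnb
    have hjj' : before c jstar' jstar := btrans c (down hj'lt) hbi0
    have hstrict := step1 hj'lt hjj'
    have hjne : jstar ≠ i0 := fun h => hbig (by rw [h]; exact hsi0)
    rcases (Finset.univ.filter
        (fun k : Fin n => ¬ (small k ↔ small' k) ∧ k ≠ i0)).eq_empty_or_nonempty with hDe | hDne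
    · -- no divergence : the candidate set of jstar is unchanged, its cost drops
      have hall' : ∀ m : Fin n, m ≠ i0 → (small m ↔ small' m) := by
        intro m hm; by_contra hne
        exact Finset.eq_empty_iff_forall_notMem.mp hDe m
          (Finset.mem_filter.mpr ⟨Finset.mem_univ _, hne, hm⟩)
      have hset : (Finset.univ.filter (fun i : Fin n => before c' i jstar ∧ small' i))
          = Finset.univ.filter (fun i : Fin n => before c i jstar ∧ small i) := by
        ext x
        simp only [Finset.mem_filter, Finset.mem_univ, true_and]
        constructor
        · rintro ⟨hb, hs⟩
          by_cases hx : x = i0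
          · subst hx; exact ⟨hbi0, hsi0⟩
          · exact ⟨(same2 hx hjne).mp hb, (hall' x hx).mpr hs⟩
        · rintro ⟨hb, hs⟩
          by_cases hx : x = i0
          · subst hx; exact ⟨up hbi0, hs'i0⟩
          · exact ⟨(same2 hx hjne).mpr hb, (hall' x hx).mp hs⟩
      have hnsj : ¬ small' jstar := fun h => hbig ((hall' jstar hjne).mpr h)
      have hminj := hmin' jstar hnsj
      rw [hset] at hminj
      have hi0mem : i0 ∈ insert jstar (Finset.univ.filter (fun i : Fin n => before c i jstar ∧ small i)) := hi0
      have hgj' : (∑ i ∈ insert jstar (Finset.univ.filter (fun i : Fin n => before c i jstar ∧ small i)), c' i)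
          = (∑ i ∈ insert jstar (Finset.univ.filter (fun i : Fin n => before c i jstar ∧ small i)), c i)
            - c i0 + c' i0 := by
        rw [← Finset.sum_erase_add _ c' hi0mem, ← Finset.sum_erase_add _ c hi0mem]
        have he : (∑ i ∈ (insert jstar (Finset.univ.filter (fun i : Fin n => before c i jstar ∧ small i))).erase i0, c' i)
            = ∑ i ∈ (insert jstar (Finset.univ.filter (fun i : Fin n => before c i jstar ∧ small i))).erase i0, c i :=
          Finset.sum_congr rfl fun x hx => hsame x (Finset.mem_erase.mp hx).1
        rw [he]; ring
      linarith
    · -- there is a divergence : take the earliest one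
      obtain ⟨k, hkD, hkmin⟩ := Finset.exists_min_image _ rk hDne
      obtain ⟨-, hk2, hk1⟩ := Finset.mem_filter.mp hkD
      have hk3 : before c' i0 k := by
        rcases btot c' (Ne.symm hk1) with h | h
        · exact h
        · exact absurd (L1 k h) hk2
      have hmineq : ∀ x : Fin n, x ≠ i0 → before c' x k → (small x ↔ small' x) := by
        intro x hx hxk
        by_contra hne
        have hxD : x ∈ Finset.univ.filter (fun k : Fin n => ¬ (small k ↔ small' k) ∧ k ≠ i0) :=
          Finset.mem_filter.mpr ⟨Finset.mem_univ _, hne, hx⟩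
        exact absurd (rk_lt hxk) (not_lt.mpr (hkmin x hxD))
      rcases btot c hk1 with hki0 | hi0k
      · obtain ⟨hsk, hs'k, hset⟩ := divstep k hk1 hs'i0 hki0 hk3 hmineq hk2
        exact bound_contra k hsk hs'k hki0 hk3 (btrans c hki0 hbi0) hset hj'lt hjj'
      · -- impossible : items after i0 (in both orders) cannot be the first divergence
        have hset0 : (Finset.univ.filter (fun i : Fin n => before c i k ∧ small i))
            = Finset.univ.filter (fun i : Fin n => before c' i k ∧ small' i) := by
          ext x
          simp only [Finset.mem_filter, Finset.mem_univ, true_and]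
          constructor
          · rintro ⟨hb, hs⟩
            by_cases hx : x = i0
            · subst hx; exact ⟨up hi0k, hs'i0⟩
            · have hb' := (same2 hx hk1).mpr hb
              exact ⟨hb', (hmineq x hx hb').mp hs⟩
          · rintro ⟨hb, hs⟩
            by_cases hx : x = i0
            · subst hx; exact ⟨hi0k, hsi0⟩
            · exact ⟨(same2 hx hk1).mp hb, (hmineq x hx hb).mpr hs⟩
        exact hk2 (by rw [hsmall k, hsmall' k, hset0])
end
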